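/- arXiv:1511.01115 — 8 statements merged into one kernel-verified Lean document; each statement's English description precedes it below -/
import Mathlib

section
/- Let n ≥ 1 and let λ_0, …, λ_n and μ_0, …, μ_n be two families of vectors in the Euclidean space ℝ^n, each satisfying ⟨λ_k, λ_l⟩ = 1 (resp. ⟨μ_k, μ_l⟩ = 1) if k = l and = −1/n if k ≠ l. Then there exists a linear isometric automorphism A of ℝ^n such that A λ_k = μ_k for all 0 ≤ k ≤ n. -/
/-!
The Gram matrix of a finite family determines the norm of every linear combination of it, hence
the kernel of its linear-combination map. So a family spanning `E` is carried to any family with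
the same Gram matrix by a linear isometry. Both families here have the Gram matrix of a regular
simplex, and the simplex spans `ℝ^n` because any `n` of its vertices have the nonsingular Gram
matrix `(1 + 1/n) I - (1/n) J`.
-/

open Module Submodule

section GramIsometry

variable {𝕜 E ι : Type*} [RCLike 𝕜] [NormedAddCommGroup E] [InnerProductSpace 𝕜 E] [Fintype ι]

lemma inner_linearCombination_eq_of_inner_eq {v w : ι → E}
    (h : ∀ i j, inner 𝕜 (v i) (v j) = inner 𝕜 (w i) (w j)) (c d : ι → 𝕜) :
    inner 𝕜 (Fintype.linearCombination 𝕜 v c) (Fintype.linearCombination 𝕜 v d) =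
      inner 𝕜 (Fintype.linearCombination 𝕜 w c) (Fintype.linearCombination 𝕜 w d) := by
  simp [Fintype.linearCombination_apply, sum_inner, inner_sum, inner_smul_left,
    inner_smul_right, h]

lemma norm_linearCombination_eq_of_inner_eq {v w : ι → E}
    (h : ∀ i j, inner 𝕜 (v i) (v j) = inner 𝕜 (w i) (w j)) (c : ι → 𝕜) :
    ‖Fintype.linearCombination 𝕜 v c‖ = ‖Fintype.linearCombination 𝕜 w c‖ := by
  rw [← sq_eq_sq₀ (norm_nonneg _) (norm_nonneg _), ← inner_self_eq_norm_sq (𝕜 := 𝕜),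
    ← inner_self_eq_norm_sq (𝕜 := 𝕜), inner_linearCombination_eq_of_inner_eq h]

theorem exists_linearIsometryEquiv_apply_eq_of_inner_eq [FiniteDimensional 𝕜 E] {v w : ι → E}
    (hv : span 𝕜 (Set.range v) = ⊤)
    (h : ∀ i j, inner 𝕜 (v i) (v j) = inner 𝕜 (w i) (w j)) :
    ∃ A : E ≃ₗᵢ[𝕜] E, ∀ i, A (v i) = w i := by
  classical
  set Lv := Fintype.linearCombination 𝕜 v
  set Lw := Fintype.linearCombination 𝕜 w
  obtain ⟨g, hg⟩ := Lv.exists_rightInverse_of_surjective (by rwa [Fintype.range_linearCombination])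
  have hLvg : ∀ x, Lv (g x) = x := LinearMap.congr_fun hg
  let A : E →ₗᵢ[𝕜] E :=
    { toLinearMap := Lw ∘ₗ g
      norm_map' := fun x => by
        simp [← norm_linearCombination_eq_of_inner_eq h, Lv, Lw, hLvg] }
  -- `Lw` vanishes wherever `Lv` does, so `Lw ∘ g` does not depend on the right inverse `g`.
  have hA : ∀ c, Lw (g (Lv c)) = Lw c := fun c => by
    rw [← sub_eq_zero, ← map_sub, ← norm_eq_zero, ← norm_linearCombination_eq_of_inner_eq h,
      norm_eq_zero, map_sub, sub_eq_zero]
    exact hLvg _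
  refine ⟨A.toLinearIsometryEquiv rfl, fun i => ?_⟩
  simpa [A, Lv, Lw] using hA (Pi.single i 1)

end GramIsometry

lemma linearIndependent_of_inner_eq_ite {E ι : Type*} [NormedAddCommGroup E]
    [InnerProductSpace ℝ E] [Fintype ι] [DecidableEq ι] {u : ι → E} {α β : ℝ}
    (hαβ : α ≠ β) (hsum : α + (Fintype.card ι - 1) * β ≠ 0)
    (hu : ∀ i j, inner ℝ (u i) (u j) = if i = j then α else β) :
    LinearIndependent ℝ u := by
  rw [Fintype.linearIndependent_iff]
  intro g hg
  have hcoord : ∀ j, (α - β) * g j + β * ∑ i, g i = 0 := fun j => by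
    have h0 : inner ℝ (∑ i, g i • u i) (u j) = 0 := by rw [hg, inner_zero_left]
    rw [← h0, sum_inner]
    simp only [real_inner_smul_left, hu]
    rw [← Finset.sum_ite_eq_of_mem' Finset.univ j g (Finset.mem_univ j), Finset.mul_sum,
      Finset.mul_sum, ← Finset.sum_add_distrib]
    refine Finset.sum_congr rfl fun i _ => ?_
    split_ifs <;> ring
  have hS : ∑ i, g i = 0 := by
    have := Finset.sum_eq_zero (s := Finset.univ) fun j _ => hcoord j
    rw [Finset.sum_add_distrib, ← Finset.mul_sum, Finset.sum_const, Finset.card_univ,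
      nsmul_eq_mul] at this
    refine (mul_eq_zero.mp ?_).resolve_left hsum
    linear_combination this
  intro j
  simpa [hS, sub_ne_zero.mpr hαβ] using hcoord j

lemma span_range_eq_top_of_inner_eq_ite {E : Type*} [NormedAddCommGroup E]
    [InnerProductSpace ℝ E] {n : ℕ} (hn : 1 ≤ n) (hE : finrank ℝ E = n)
    {u : Fin (n + 1) → E}
    (hu : ∀ k l, inner ℝ (u k) (u l) = if k = l then 1 else -1 / (n : ℝ)) :
    span ℝ (Set.range u) = ⊤ := by
  have : Nonempty (Fin n) := ⟨⟨0, hn⟩⟩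
  have hn' : (n : ℝ) ≠ 0 := by positivity
  have hli : LinearIndependent ℝ (u ∘ Fin.succ) := by
    refine linearIndependent_of_inner_eq_ite (α := 1) (β := -1 / n) ?_ ?_ fun i j => ?_
    · have : (0 : ℝ) < n := by positivity
      rw [ne_eq, eq_div_iff hn']
      linarith
    · field_simp
      simpa using hn'
    · simp [hu]
  refine top_le_iff.mp ?_
  rw [← hli.span_eq_top_of_card_eq_finrank (by simp [hE])]
  exact span_mono (Set.range_comp_subset_range _ _)

/-- Any two families of `n+1` unit vectors in `ℝ^n` symmetric about the origin
are related by a linear isometric automorphism of `ℝ^n`. -/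
theorem exists_isometry_mapping_symmetric_unit_vectors (n : ℕ) (hn : 1 ≤ n)
    (lam mu : Fin (n + 1) → EuclideanSpace ℝ (Fin n))
    (hlam : ∀ k l : Fin (n + 1),
      (inner ℝ (lam k) (lam l) : ℝ) = if k = l then 1 else -1 / (n : ℝ))
    (hmu : ∀ k l : Fin (n + 1),
      (inner ℝ (mu k) (mu l) : ℝ) = if k = l then 1 else -1 / (n : ℝ)) :
    ∃ A : EuclideanSpace ℝ (Fin n) ≃ₗᵢ[ℝ] EuclideanSpace ℝ (Fin n),
      ∀ k : Fin (n + 1), A (lam k) = mu k :=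
  exists_linearIsometryEquiv_apply_eq_of_inner_eq
    (span_range_eq_top_of_inner_eq_ite hn finrank_euclideanSpace_fin hlam)
    fun k l => by rw [hlam, hmu]
end

section
/- Let λ_0, …, λ_4 be quaternions with ⟨λ_k, λ_l⟩ = 1 if k = l and −1/4 if k ≠ l, and define F : ℂ^5 × ℍ × ℍ → ℍ by F(Z, V, W) = 2 ∑_{k=0}^{4} |Z_k|² λ_k + V W. Then at every point (Z, V, W) ≠ (0, 0, 0) with F(Z, V, W) = 0, the Fréchet derivative of F over ℝ is a surjective ℝ-linear map onto ℍ. -/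
/-!
The derivative is `(z, v, w) ↦ 4 ∑ ⟪Z_k, z_k⟫ λ_k + V w + v W`, so if `V` or `W` is nonzero the
last two terms alone reach all of `ℍ`. Otherwise `Z ≠ 0` and `∑ |Z_k|² λ_k = 0`; pairing this
relation with `λ_l` gives `5 |Z_l|² = ∑ |Z_k|²` for every `l`, so no `Z_k` vanishes and every `λ_k`
is in the image. The same pairing shows that any four of the `λ_k` are linearly independent, hence
span `ℍ`.
-/

open Quaternion

open scoped InnerProductSpace

theorem Quaternion.real_inner_eq_re_star_mul (a b : ℍ[ℝ]) : ⟪a, b⟫_ℝ = (star a * b).re := by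
  simp only [inner_def, re_mul, re_star, imI_star, imJ_star, imK_star]
  ring

section Gram

variable {E : Type*} [NormedAddCommGroup E] [InnerProductSpace ℝ E] {ι : Type*} [Fintype ι]
  [DecidableEq ι] {u : ι → E}

theorem five_mul_eq_sum_of_sum_smul_eq_zero
    (hu : ∀ k l, ⟪u k, u l⟫_ℝ = if k = l then 1 else -1 / 4) {c : ι → ℝ}
    (hc : ∑ k, c k • u k = 0) (l : ι) : 5 * c l = ∑ k, c k := by
  have h : ∑ k, c k * ⟪u k, u l⟫_ℝ = 0 := by
    simp only [← real_inner_smul_left, ← sum_inner, hc, inner_zero_left]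
  have hsplit : ∀ k, c k * ⟪u k, u l⟫_ℝ = 5 / 4 * (if k = l then c k else 0) - 1 / 4 * c k := by
    intro k; rw [hu]; split_ifs <;> ring
  simp only [hsplit, Finset.sum_sub_distrib, ← Finset.mul_sum, Finset.sum_ite_eq',
    Finset.mem_univ, if_true] at h
  linarith

theorem linearIndependent_of_inner_eq
    (hu : ∀ k l, ⟪u k, u l⟫_ℝ = if k = l then 1 else -1 / 4) (hcard : Fintype.card ι ≠ 5) :
    LinearIndependent ℝ u := by
  rw [Fintype.linearIndependent_iff]
  intro c hc
  have hsum : ∑ k, c k = 0 := by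
    have h := Finset.sum_congr rfl fun l (_ : l ∈ Finset.univ) =>
      five_mul_eq_sum_of_sum_smul_eq_zero hu hc l
    simp only [← Finset.mul_sum, Finset.sum_const, Finset.card_univ, nsmul_eq_mul] at h
    have h' : (5 - Fintype.card ι : ℝ) * ∑ k, c k = 0 := by linarith
    exact (mul_eq_zero.1 h').resolve_left (sub_ne_zero.2 (mod_cast hcard.symm))
  intro l
  linarith [five_mul_eq_sum_of_sum_smul_eq_zero hu hc l]

theorem forall_ne_zero_of_sum_norm_sq_smul_eq_zero
    (hu : ∀ k l, ⟪u k, u l⟫_ℝ = if k = l then 1 else -1 / 4) {F : Type*} [NormedAddCommGroup F]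
    {z : ι → F} (hz : z ≠ 0) (h : ∑ k, ‖z k‖ ^ 2 • u k = 0) (k : ι) : z k ≠ 0 := by
  obtain ⟨j, hj⟩ := Function.ne_iff.1 hz
  have hk := five_mul_eq_sum_of_sum_smul_eq_zero hu h k
  have hj' := five_mul_eq_sum_of_sum_smul_eq_zero hu h j
  have hzj : 0 < ‖z j‖ := norm_pos_iff.2 hj
  intro hzk
  simp only [hzk, norm_zero] at hk
  nlinarith

theorem span_range_eq_top_of_inner_eq {u : Fin 5 → E}
    (hu : ∀ k l, ⟪u k, u l⟫_ℝ = if k = l then 1 else -1 / 4)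
    (hE : Module.finrank ℝ E = 4) : Submodule.span ℝ (Set.range u) = ⊤ := by
  have hind : LinearIndependent ℝ (u ∘ Fin.castSucc) :=
    linearIndependent_of_inner_eq (fun k l => by simp [hu, Fin.castSucc_inj]) (by simp)
  refine eq_top_iff.2 ((hind.span_eq_top_of_card_eq_finrank (by simp [hE])).ge.trans ?_)
  exact Submodule.span_mono (Set.range_comp_subset_range _ _)

end Gram

section Quadric

variable {ι E A : Type*} [Fintype ι] [NormedAddCommGroup E] [InnerProductSpace ℝ E]

def quadric [NormedRing A] [NormedAlgebra ℝ A] (a : ι → A) (q : (ι → E) × A × A) : A :=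
  (2 : ℝ) • ∑ k, ‖q.1 k‖ ^ 2 • a k + q.2.1 * q.2.2

theorem fderiv_quadric_apply [NormedRing A] [NormedAlgebra ℝ A] (a : ι → A)
    (p v : (ι → E) × A × A) :
    fderiv ℝ (quadric a) p v =
      (4 : ℝ) • ∑ k, ⟪p.1 k, v.1 k⟫_ℝ • a k + (p.2.1 * v.2.2 + v.2.1 * p.2.2) := by
  have hZ : HasFDerivAt (𝕜 := ℝ) (fun q : (ι → E) × A × A => q.1) _ p := hasFDerivAt_fst
  have hV : HasFDerivAt (𝕜 := ℝ) (fun q : (ι → E) × A × A => q.2.1) _ p :=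
    hasFDerivAt_fst.comp p hasFDerivAt_snd
  have hW : HasFDerivAt (𝕜 := ℝ) (fun q : (ι → E) × A × A => q.2.2) _ p :=
    hasFDerivAt_snd.comp p hasFDerivAt_snd
  have hnorm (k : ι) := (((hasFDerivAt_apply k p.1).comp p hZ).norm_sq).smul_const (a k)
  have hsum := HasFDerivAt.fun_sum (u := Finset.univ) fun k _ => hnorm k
  have hquadric : HasFDerivAt (quadric a) _ p :=
    (hsum.fun_const_smul (2 : ℝ)).fun_add (hV.mul' hW)
  rw [hquadric.fderiv]
  norm_num [Finset.smul_sum, smul_smul, ← mul_assoc]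

theorem surjective_fderiv_quadric_of_right_ne_zero [NormedDivisionRing A] [NormedAlgebra ℝ A]
    (a : ι → A) {p : (ι → E) × A × A} (hW : p.2.2 ≠ 0) :
    Function.Surjective (fderiv ℝ (quadric a) p) :=
  fun q => ⟨(0, q * p.2.2⁻¹, 0), by simp [fderiv_quadric_apply, hW]⟩

theorem surjective_fderiv_quadric_of_left_ne_zero [NormedDivisionRing A] [NormedAlgebra ℝ A]
    (a : ι → A) {p : (ι → E) × A × A} (hV : p.2.1 ≠ 0) :
    Function.Surjective (fderiv ℝ (quadric a) p) :=
  fun q => ⟨(0, 0, p.2.1⁻¹ * q), by simp [fderiv_quadric_apply, hV]⟩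

theorem mem_range_fderiv_quadric [DecidableEq ι] [NormedRing A] [NormedAlgebra ℝ A] (a : ι → A)
    {p : (ι → E) × A × A} (hVW : p.2 = 0) {k : ι} (hZ : p.1 k ≠ 0) :
    a k ∈ LinearMap.range (fderiv ℝ (quadric a) p : (ι → E) × A × A →ₗ[ℝ] A) := by
  refine ⟨(Pi.single k ((4 * ‖p.1 k‖ ^ 2)⁻¹ • p.1 k), 0), ?_⟩
  have hnorm : ‖p.1 k‖ ^ 2 ≠ 0 := by positivity
  rw [ContinuousLinearMap.coe_coe, fderiv_quadric_apply,
    Finset.sum_eq_single k (fun j _ hj => by simp [hj]) (by simp)]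
  simp only [hVW, Prod.fst_zero, Prod.snd_zero, mul_zero, add_zero, Pi.single_eq_same,
    real_inner_smul_right, real_inner_self_eq_norm_sq, smul_smul]
  convert one_smul ℝ (a k) using 2
  field_simp

end Quadric

/-- For symmetric unit quaternions `λ_0, …, λ_4`, the map
`F(Z, V, W) = 2 ∑ |Z_k|² λ_k + V W` has surjective (real) Fréchet derivative at every
nonzero point of its zero set. -/
theorem fderiv_surjective_on_zero_set (lam : Fin 5 → Quaternion ℝ)
    (hlam : ∀ k l : Fin 5,
      (star (lam k) * lam l).re = if k = l then 1 else -1 / 4)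
    (F : (Fin 5 → ℂ) × Quaternion ℝ × Quaternion ℝ → Quaternion ℝ)
    (hF : ∀ p : (Fin 5 → ℂ) × Quaternion ℝ × Quaternion ℝ,
      F p = (2 : ℝ) • (∑ k, (‖p.1 k‖ ^ 2) • lam k) + p.2.1 * p.2.2)
    (p : (Fin 5 → ℂ) × Quaternion ℝ × Quaternion ℝ) (hp : p ≠ 0) (hFp : F p = 0) :
    Function.Surjective (fderiv ℝ F p) := by
  obtain rfl : F = quadric lam := funext hF
  have hgram : ∀ k l, ⟪lam k, lam l⟫_ℝ = if k = l then 1 else -1 / 4 := by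
    simpa only [Quaternion.real_inner_eq_re_star_mul] using hlam
  rcases ne_or_eq p.2.2 0 with hW | hW
  · exact surjective_fderiv_quadric_of_right_ne_zero lam hW
  rcases ne_or_eq p.2.1 0 with hV | hV
  · exact surjective_fderiv_quadric_of_left_ne_zero lam hV
  have hVW : p.2 = 0 := Prod.ext hV hW
  have hZ : p.1 ≠ 0 := fun hZ => hp (Prod.ext hZ hVW)
  have hsum : ∑ k, ‖p.1 k‖ ^ 2 • lam k = 0 := by
    simpa [quadric, hV] using hFp
  refine LinearMap.range_eq_top.1 (eq_top_iff.2 ?_)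
  rw [← span_range_eq_top_of_inner_eq hgram Quaternion.finrank_eq_four, Submodule.span_le]
  rintro _ ⟨k, rfl⟩
  exact mem_range_fderiv_quadric lam hVW
    (forall_ne_zero_of_sum_norm_sq_smul_eq_zero hgram hZ hsum k)
end

section
/- Let λ_0, …, λ_4 be quaternions with ⟨λ_k, λ_l⟩ = 1 if k = l and −1/4 if k ≠ l. Let Y ⊆ ℂ^5 × ℍ × ℍ be the set of (Z, V, W) with 2 ∑_{k=0}^{4} |Z_k|² λ_k + V W = 0 and ∑_{k=0}^{4} |Z_k|² + |V|² + |W|² = 1, and let X ⊆ ℂ^5 × ℍ^5 be the set of (z, u) such that |z_k|² + |u_k|² = 1 for each 0 ≤ k ≤ 4 and there exist V', W' ∈ ℍ with u_k = V' λ_k + W' for all k. Then the map (Z, V, W) ↦ (√5 · Z, ((conj V) λ_0 + W, …, (conj V) λ_4 + W)) is a bijection from Y onto X. -/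
/-!
The `λ_k` are the vertices of a regular simplex spanning `ℍ ≅ ℝ⁴`, so `∑ λ_k = 0` and they form a
tight frame: `∑ ⟪λ_k, q⟫ λ_k = (5/4) q` for every `q`. Since `‖conj V λ_k + W‖² =
‖V‖² + ‖W‖² + 2 ⟪λ_k, V W⟫`, the five norm equations of `X` at the image of `(Z, V, W)` read
`5 |Z_k|² + ‖V‖² + ‖W‖² + 2 ⟪λ_k, V W⟫ = 1`; pairing them with the `λ_k` (frame identity) and
summing them (`∑ λ_k = 0`) shows they are equivalent to the two equations of `Y`. Two distinct
`λ_k` determine `V` and `W`, which gives injectivity.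
-/

open Module Quaternion Set
open scoped RealInnerProductSpace

section EquiangularFamily

variable {ι E : Type*} [DecidableEq ι] [NormedAddCommGroup E] [InnerProductSpace ℝ E]
  {v : ι → E} {c : ℝ}

theorem injective_of_inner_eq_ite (hv : ∀ k l, ⟪v k, v l⟫ = if k = l then 1 else c)
    (hc : c ≠ 1) : Function.Injective v := by
  intro k l hkl
  by_contra hne
  have h := hv k l
  rw [if_neg hne, hkl, hv l l, if_pos rfl] at h
  exact hc h.symm

variable [Fintype ι]

theorem inner_sum_smul_of_inner_eq_ite (hv : ∀ k l, ⟪v k, v l⟫ = if k = l then 1 else c)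
    (g : ι → ℝ) (k : ι) : ⟪v k, ∑ l, g l • v l⟫ = (1 - c) * g k + c * ∑ l, g l := by
  have hsplit : ∀ l,
      g l * (if k = l then 1 else c) = c * g l + if k = l then (1 - c) * g l else 0 := fun l => by
    split_ifs <;> ring
  simp_rw [inner_sum, real_inner_smul_right, hv, hsplit, Finset.sum_add_distrib,
    Finset.sum_ite_eq, Finset.mem_univ, if_true, ← Finset.mul_sum]
  ring

theorem sum_eq_zero_of_inner_eq_ite (hv : ∀ k l, ⟪v k, v l⟫ = if k = l then 1 else c)
    (hc : 1 + (Fintype.card ι - 1) * c = 0) : ∑ k, v k = 0 := by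
  have h := inner_sum_smul_of_inner_eq_ite hv (fun _ => 1)
  simp only [one_smul, mul_one, Finset.sum_const, Finset.card_univ, nsmul_eq_mul] at h
  rw [← inner_self_eq_zero (𝕜 := ℝ), sum_inner]
  simp only [h, Finset.sum_const, Finset.card_univ, nsmul_eq_mul]
  linear_combination (Fintype.card ι : ℝ) * hc

theorem sum_inner_smul_eq_of_inner_eq_ite (hv : ∀ k l, ⟪v k, v l⟫ = if k = l then 1 else c)
    (hsum : ∑ k, v k = 0) {x : E} (hx : x ∈ Submodule.span ℝ (range v)) :
    ∑ k, ⟪v k, x⟫ • v k = (1 - c) • x := by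
  obtain ⟨g, rfl⟩ := (Submodule.mem_span_range_iff_exists_fun ℝ).1 hx
  simp_rw [inner_sum_smul_of_inner_eq_ite hv, add_smul, Finset.sum_add_distrib,
    ← Finset.smul_sum, hsum, smul_zero, add_zero, mul_smul, ← Finset.smul_sum]

theorem span_range_eq_top_of_inner_eq_ite_s9 [FiniteDimensional ℝ E]
    (hv : ∀ k l, ⟪v k, v l⟫ = if k = l then 1 else c) (hc : c ≠ 1)
    (hdim : finrank ℝ E + 1 = Fintype.card ι) : Submodule.span ℝ (range v) = ⊤ := by
  set L := Fintype.linearCombination ℝ v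
  -- pairing a relation `∑ l, g l • v l = 0` with each `v k` forces all `g k` to be equal
  have hker : LinearMap.ker L ≤ ℝ ∙ (1 : ι → ℝ) := by
    intro g hg
    have hk := inner_sum_smul_of_inner_eq_ite hv g
    simp only [LinearMap.mem_ker, L, Fintype.linearCombination_apply] at hg
    simp only [hg, inner_zero_right] at hk
    refine Submodule.mem_span_singleton.2 ⟨c * (∑ l, g l) / (c - 1), funext fun k => ?_⟩
    have : c - 1 ≠ 0 := sub_ne_zero.2 hc
    rw [Pi.smul_apply, Pi.one_apply, smul_eq_mul, mul_one, eq_comm, eq_div_iff this]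
    linear_combination hk k
  have hker_le : finrank ℝ (LinearMap.ker L) ≤ 1 :=
    (Submodule.finrank_mono hker).trans ((finrank_span_le_card _).trans (by simp))
  have hrank := L.finrank_range_add_finrank_ker
  have hle := Submodule.finrank_le (LinearMap.range L)
  rw [finrank_fintype_fun_eq_card] at hrank
  rw [← Fintype.range_linearCombination]
  exact Submodule.eq_top_of_finrank_eq (show finrank ℝ (LinearMap.range L) = _ by omega)

end EquiangularFamily

theorem two_smul_sum_add_eq_zero_and_sum_add_eq_one_iff {E : Type*} [NormedAddCommGroup E]
    [InnerProductSpace ℝ E] [FiniteDimensional ℝ E] (hE : finrank ℝ E = 4) {v : Fin 5 → E}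
    (hv : ∀ k l, ⟪v k, v l⟫ = if k = l then 1 else -1 / 4) (s : Fin 5 → ℝ) (N : ℝ) (q : E) :
    ((2 : ℝ) • ∑ k, s k • v k + q = 0 ∧ ∑ k, s k + N = 1) ↔
      ∀ k, 5 * s k + N + 2 * ⟪v k, q⟫ = 1 := by
  have hsum : ∑ k, v k = 0 := sum_eq_zero_of_inner_eq_ite hv (by norm_num)
  constructor
  · rintro ⟨hq, hs⟩ k
    rw [eq_neg_of_add_eq_zero_right hq, inner_neg_right, real_inner_smul_right,
      inner_sum_smul_of_inner_eq_ite hv]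
    linear_combination hs
  · intro h
    have hs : ∀ k, s k = (1 - N) / 5 - (2 / 5) * ⟪v k, q⟫ := fun k => by linear_combination h k / 5
    have hspan := span_range_eq_top_of_inner_eq_ite_s9 hv (by norm_num) (by simp [hE])
    have hframe : ∑ k, ⟪v k, q⟫ • v k = (5 / 4 : ℝ) • q := by
      rw [sum_inner_smul_eq_of_inner_eq_ite hv hsum (hspan ▸ Submodule.mem_top)]
      norm_num
    refine ⟨?_, ?_⟩
    · simp_rw [hs, sub_smul, Finset.sum_sub_distrib, ← Finset.smul_sum, mul_smul,
        ← Finset.smul_sum, hsum, hframe]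
      module
    · simp_rw [hs, Finset.sum_sub_distrib, ← Finset.mul_sum, ← sum_inner, hsum, inner_zero_left]
      simp only [Finset.sum_const, Finset.card_univ, Fintype.card_fin, nsmul_eq_mul,
        Nat.cast_ofNat, mul_zero, sub_zero]
      ring

theorem Quaternion.re_star_mul (a b : ℍ) : (star a * b).re = ⟪a, b⟫ := by
  simp [inner_def]

theorem Quaternion.inner_star_mul_left (a b c : ℍ) : ⟪star a * b, c⟫ = ⟪b, a * c⟫ := by
  simp only [inner_def, re_mul, re_star, imI_star, imJ_star, imK_star, imI_mul, imJ_mul, imK_mul,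
    star_mul, neg_mul, mul_neg, neg_neg, sub_neg_eq_add]
  ring

theorem Quaternion.norm_star_mul_add_sq (a b μ : ℍ) :
    ‖star a * μ + b‖ ^ 2 = ‖a‖ ^ 2 * ‖μ‖ ^ 2 + ‖b‖ ^ 2 + 2 * ⟪μ, a * b⟫ := by
  rw [norm_add_sq_real, inner_star_mul_left, norm_mul, norm_star]
  ring

theorem eq_and_eq_of_mul_add_eq_mul_add {R : Type*} [DivisionRing R] {μ ν a b a' b' : R}
    (hμν : μ ≠ ν) (hμ : a * μ + b = a' * μ + b') (hν : a * ν + b = a' * ν + b') :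
    a = a' ∧ b = b' := by
  have ha : a = a' := mul_right_cancel₀ (sub_ne_zero.2 hμν) (by
    simpa only [mul_sub, add_sub_add_right_eq_sub] using congrArg₂ (· - ·) hμ hν)
  subst ha
  exact ⟨rfl, add_left_cancel hμ⟩

theorem Complex.norm_ofReal_sqrt_mul_sq {r : ℝ} (hr : 0 ≤ r) (z : ℂ) :
    ‖(Real.sqrt r : ℂ) * z‖ ^ 2 = r * ‖z‖ ^ 2 := by
  rw [norm_mul, mul_pow, norm_real, Real.norm_of_nonneg (Real.sqrt_nonneg r), Real.sq_sqrt hr]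

theorem quadrics_iff_norm_sq_add_norm_sq_eq_one {lam : Fin 5 → ℍ}
    (hv : ∀ k l, ⟪lam k, lam l⟫ = if k = l then 1 else -1 / 4) (Z : Fin 5 → ℂ) (V W : ℍ) :
    ((2 : ℝ) • ∑ k, ‖Z k‖ ^ 2 • lam k + V * W = 0 ∧ ∑ k, ‖Z k‖ ^ 2 + ‖V‖ ^ 2 + ‖W‖ ^ 2 = 1) ↔
      ∀ k, ‖(Real.sqrt 5 : ℂ) * Z k‖ ^ 2 + ‖star V * lam k + W‖ ^ 2 = 1 := by
  have hunit : ∀ k, ‖lam k‖ = 1 := fun k => by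
    rw [norm_eq_sqrt_real_inner, hv, if_pos rfl, Real.sqrt_one]
  simp only [Complex.norm_ofReal_sqrt_mul_sq (by norm_num : (0 : ℝ) ≤ 5),
    norm_star_mul_add_sq, hunit, one_pow, mul_one, add_assoc,
    two_smul_sum_add_eq_zero_and_sum_add_eq_one_iff finrank_eq_four hv]

/-- For symmetric unit quaternions `λ_0, …, λ_4`, the map
`(Z, V, W) ↦ (√5 Z, ((conj V) λ_0 + W, …, (conj V) λ_4 + W))` is a bijection from the
intersection of quadrics `Y` onto the generalized polygon space `X`. -/
theorem bijOn_Y_X (lam : Fin 5 → Quaternion ℝ)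
    (hlam : ∀ k l : Fin 5,
      (star (lam k) * lam l).re = if k = l then 1 else -1 / 4)
    (Y : Set ((Fin 5 → ℂ) × Quaternion ℝ × Quaternion ℝ))
    (hY : Y = {p | (2 : ℝ) • (∑ k, (‖p.1 k‖ ^ 2) • lam k)
        + p.2.1 * p.2.2 = 0 ∧
      (∑ k, ‖p.1 k‖ ^ 2) + ‖p.2.1‖ ^ 2 + ‖p.2.2‖ ^ 2 = 1})
    (X : Set ((Fin 5 → ℂ) × (Fin 5 → Quaternion ℝ)))
    (hX : X = {q | (∀ k : Fin 5, ‖q.1 k‖ ^ 2 + ‖q.2 k‖ ^ 2 = 1) ∧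
      ∃ V' W' : Quaternion ℝ, ∀ k : Fin 5, q.2 k = V' * lam k + W'}) :
    Set.BijOn
      (fun p : (Fin 5 → ℂ) × Quaternion ℝ × Quaternion ℝ =>
        ((fun k => (Real.sqrt 5 : ℂ) * p.1 k : Fin 5 → ℂ),
         (fun k => star p.2.1 * lam k + p.2.2 : Fin 5 → Quaternion ℝ)))
      Y X := by
  subst hX
  set f := fun p : (Fin 5 → ℂ) × ℍ × ℍ =>
    ((fun k => (Real.sqrt 5 : ℂ) * p.1 k : Fin 5 → ℂ), fun k => star p.2.1 * lam k + p.2.2)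
  have hv : ∀ k l, ⟪lam k, lam l⟫ = if k = l then 1 else -1 / 4 := fun k l => by
    rw [← re_star_mul, hlam]
  have hmem : ∀ p, p ∈ Y ↔ ∀ k, ‖(f p).1 k‖ ^ 2 + ‖(f p).2 k‖ ^ 2 = 1 := fun p => by
    rw [hY]
    exact quadrics_iff_norm_sq_add_norm_sq_eq_one hv p.1 p.2.1 p.2.2
  refine ⟨fun p hp => ⟨(hmem p).1 hp, star p.2.1, p.2.2, fun k => rfl⟩, ?_, ?_⟩
  · rintro ⟨Z, V, W⟩ - ⟨Z', V', W'⟩ - h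
    simp only [f, Prod.mk.injEq, funext_iff] at h
    obtain ⟨hZ, hu⟩ := h
    have h01 : lam 0 ≠ lam 1 := (injective_of_inner_eq_ite hv (by norm_num)).ne (by decide)
    obtain ⟨hV, rfl⟩ := eq_and_eq_of_mul_add_eq_mul_add h01 (hu 0) (hu 1)
    have h5 : (Real.sqrt 5 : ℂ) ≠ 0 := by simp
    rw [star_injective hV, funext fun k => mul_left_cancel₀ h5 (hZ k)]
  · rintro ⟨z, u⟩ ⟨hn, V', W', hu⟩
    have hp : f (fun k => (Real.sqrt 5 : ℂ)⁻¹ * z k, star V', W') = (z, u) := by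
      simp only [f, Prod.mk.injEq]
      exact ⟨funext fun k => by simp, funext fun k => by simpa using (hu k).symm⟩
    exact ⟨_, (hmem _).2 (by rw [hp]; exact hn), hp⟩
end

section
/- Let λ_0, …, λ_4 be quaternions with ⟨λ_k, λ_l⟩ = 1 if k = l and −1/4 if k ≠ l. If (Z, V, W) ∈ ℂ^5 × ℍ × ℍ satisfies 2 ∑_{k=0}^{4} |Z_k|² λ_k + V W = 0 and ∑_{k=0}^{4} |Z_k|² + |V|² + |W|² = 1, then |V W| < 1/2. -/
/-!
Write `T = ∑ |Z_k|²`. Since the `λ_k` are unit quaternions, the first equation and the triangle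
inequality give `|VW| = 2 |∑ |Z_k|² λ_k| ≤ 2T`, while AM-GM and the second equation give
`|VW| = |V| |W| ≤ (|V|² + |W|²) / 2 = (1 - T) / 2`. Hence `|VW| ≤ min (2T) ((1 - T) / 2) ≤ 2/5`.
-/

open Quaternion

theorem Quaternion.norm_eq_one_of_re_star_mul_self {a : ℍ[ℝ]} (h : (star a * a).re = 1) :
    ‖a‖ = 1 := by
  rw [star_mul_self, re_coe, normSq_eq_norm_mul_self] at h
  nlinarith [norm_nonneg a]

theorem norm_sum_smul_le_sum_of_norm_le_one {ι E : Type*} [SeminormedAddCommGroup E]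
    [NormedSpace ℝ E] (s : Finset ι) {t : ι → ℝ} {v : ι → E} (ht : ∀ i ∈ s, 0 ≤ t i)
    (hv : ∀ i ∈ s, ‖v i‖ ≤ 1) : ‖∑ i ∈ s, t i • v i‖ ≤ ∑ i ∈ s, t i := by
  refine (norm_sum_le _ _).trans (Finset.sum_le_sum fun i hi => ?_)
  rw [norm_smul, Real.norm_of_nonneg (ht i hi)]
  exact mul_le_of_le_one_right (ht i hi) (hv i hi)

theorem two_mul_norm_mul_le_sq_add_sq {R : Type*} [NonUnitalSeminormedRing R] (a b : R) :
    2 * ‖a * b‖ ≤ ‖a‖ ^ 2 + ‖b‖ ^ 2 :=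
  calc 2 * ‖a * b‖ ≤ 2 * ‖a‖ * ‖b‖ := by rw [mul_assoc]; gcongr; exact norm_mul_le a b
    _ ≤ ‖a‖ ^ 2 + ‖b‖ ^ 2 := two_mul_le_add_sq _ _

/-- For any point `(Z, V, W)` of the intersection of quadrics `Y`, one has `|VW| < 1/2`. -/
theorem norm_VW_lt_half (lam : Fin 5 → Quaternion ℝ)
    (hlam : ∀ k l : Fin 5,
      (star (lam k) * lam l).re = if k = l then 1 else -1 / 4)
    (Z : Fin 5 → ℂ) (V W : Quaternion ℝ)
    (h1 : (2 : ℝ) • (∑ k, (‖Z k‖ ^ 2) • lam k) + V * W = 0)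
    (h2 : (∑ k, ‖Z k‖ ^ 2) + ‖V‖ ^ 2 + ‖W‖ ^ 2 = 1) :
    ‖V * W‖ < 1 / 2 := by
  have hunit (k : Fin 5) : ‖lam k‖ ≤ 1 :=
    (norm_eq_one_of_re_star_mul_self (by simpa using hlam k k)).le
  have hVW : V * W = -((2 : ℝ) • ∑ k, (‖Z k‖ ^ 2) • lam k) :=
    (neg_eq_of_add_eq_zero_right h1).symm
  have hsum : ‖∑ k, (‖Z k‖ ^ 2) • lam k‖ ≤ ∑ k, ‖Z k‖ ^ 2 :=
    norm_sum_smul_le_sum_of_norm_le_one _ (fun k _ => sq_nonneg _) (fun k _ => hunit k)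
  have hle_sum : ‖V * W‖ ≤ 2 * ∑ k, ‖Z k‖ ^ 2 := by
    rw [hVW, norm_neg, norm_smul, Real.norm_two]
    gcongr
  linarith [two_mul_norm_mul_le_sq_add_sq V W]
end

section
/- Let λ_0, …, λ_4 be quaternions with ⟨λ_k, λ_l⟩ = 1 if k = l and −1/4 if k ≠ l. For every a = (a_0, …, a_4) ∈ ℝ^5 with all a_k ≥ 0 and every b ∈ ℝ such that ∑_{k=0}^{4} a_k² + b² = 1, there exist Z ∈ ℝ^5 with all Z_k ≥ 0 and V, W ∈ ℍ such that: 2 ∑_{k=0}^{4} Z_k² λ_k + V W = 0, ∑_{k=0}^{4} Z_k² + |V|² + |W|² = 1, Z_k = √(1 − 2|V W|) · a_k for all k, and |V| − |W| = √(1 − 2|V W|) · b. -/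
/-!
Put `q = ∑ a_k² λ_k` and scale by `t = (1 + 4‖q‖)^(-1/2)`, taking `Z = t a`. It remains to
factor `-2t² q = V W` with `‖V‖ - ‖W‖ = t b`, which is possible in any normed division algebra
over `ℝ`: the norms are the nonnegative roots of `x - y = t b`, `x y = 2t²‖q‖`. Then
`‖V‖² + ‖W‖² = t²b² + 4t²‖q‖` and `1 - 2‖V W‖ = t²`, and the normalisation `∑ a_k² + b² = 1`
gives the remaining identities.
-/

theorem exists_nonneg_mul_eq_sub_eq (s b : ℝ) (hs : 0 ≤ s) :
    ∃ x y : ℝ, 0 ≤ x ∧ 0 ≤ y ∧ x * y = s ∧ x - y = b := by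
  set r := √(b ^ 2 + 4 * s)
  have hr : r ^ 2 = b ^ 2 + 4 * s := Real.sq_sqrt (by positivity)
  have hbr : |b| ≤ r := by
    rw [← Real.sqrt_sq_eq_abs]
    exact Real.sqrt_le_sqrt (by linarith)
  obtain ⟨hrb, hbr⟩ := abs_le.mp hbr
  exact ⟨(r + b) / 2, (r - b) / 2, by linarith, by linarith, by linear_combination hr / 4,
    by ring⟩

theorem exists_mul_eq_of_norm_mul_norm_eq {A : Type*} [NormedDivisionRing A] [NormedAlgebra ℝ A]
    (p : A) {x y : ℝ} (hx : 0 ≤ x) (hy : 0 ≤ y) (hxy : x * y = ‖p‖) :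
    ∃ V W : A, V * W = p ∧ ‖V‖ = x ∧ ‖W‖ = y := by
  rcases hx.eq_or_lt with rfl | hx
  · have hp : p = 0 := norm_eq_zero.mp (by rw [← hxy, zero_mul])
    refine ⟨0, algebraMap ℝ A y, by rw [hp, zero_mul], norm_zero, ?_⟩
    rw [norm_algebraMap', Real.norm_of_nonneg hy]
  · refine ⟨algebraMap ℝ A x, x⁻¹ • p, ?_, ?_, ?_⟩
    · rw [← Algebra.smul_def, smul_smul, mul_inv_cancel₀ hx.ne', one_smul]
    · rw [norm_algebraMap', Real.norm_of_nonneg hx.le]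
    · rw [norm_smul, norm_inv, Real.norm_of_nonneg hx.le, ← hxy, inv_mul_cancel_left₀ hx.ne']

theorem exists_mul_eq_norm_sub_norm_eq {A : Type*} [NormedDivisionRing A] [NormedAlgebra ℝ A]
    (p : A) (b : ℝ) : ∃ V W : A, V * W = p ∧ ‖V‖ - ‖W‖ = b := by
  obtain ⟨x, y, hx, hy, hxy, hb⟩ := exists_nonneg_mul_eq_sub_eq ‖p‖ b (norm_nonneg p)
  obtain ⟨V, W, hVW, rfl, rfl⟩ := exists_mul_eq_of_norm_mul_norm_eq p hx hy hxy
  exact ⟨V, W, hVW, hb⟩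

theorem psi_surjective_general (lam : Fin 5 → Quaternion ℝ)
    (a : Fin 5 → ℝ) (ha : ∀ k, 0 ≤ a k) (b : ℝ)
    (hab : (∑ k, a k ^ 2) + b ^ 2 = 1) :
    ∃ (Z : Fin 5 → ℝ) (V W : Quaternion ℝ),
      (∀ k, 0 ≤ Z k) ∧
      (2 : ℝ) • (∑ k, (Z k ^ 2) • lam k) + V * W = 0 ∧
      (∑ k, Z k ^ 2) + ‖V‖ ^ 2 + ‖W‖ ^ 2 = 1 ∧
      (∀ k, Z k = Real.sqrt (1 - 2 * ‖V * W‖) * a k) ∧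
      ‖V‖ - ‖W‖ = Real.sqrt (1 - 2 * ‖V * W‖) * b := by
  set q := ∑ k, a k ^ 2 • lam k
  obtain ⟨t, ht0, ht⟩ : ∃ t : ℝ, 0 ≤ t ∧ t ^ 2 * (1 + 4 * ‖q‖) = 1 := by
    have hpos : 0 < 1 + 4 * ‖q‖ := by positivity
    refine ⟨(√(1 + 4 * ‖q‖))⁻¹, by positivity, ?_⟩
    rw [inv_pow, Real.sq_sqrt hpos.le, inv_mul_cancel₀ hpos.ne']
  obtain ⟨V, W, hVW, hdiff⟩ := exists_mul_eq_norm_sub_norm_eq (-(2 * t ^ 2) • q) (t * b)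
  have hnorm : ‖V * W‖ = 2 * t ^ 2 * ‖q‖ := by
    rw [hVW, norm_smul, norm_neg, Real.norm_of_nonneg (by positivity)]
  have hsqrt : √(1 - 2 * ‖V * W‖) = t := by
    rw [hnorm, show 1 - 2 * (2 * t ^ 2 * ‖q‖) = t ^ 2 by linarith, Real.sqrt_sq ht0]
  refine ⟨fun k => t * a k, V, W, fun k => mul_nonneg ht0 (ha k), ?_, ?_,
    fun k => by rw [hsqrt], by rw [hsqrt, hdiff]⟩
  · have hsum : ∑ k, (t * a k) ^ 2 • lam k = t ^ 2 • q := by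
      simp only [q, Finset.smul_sum, smul_smul, mul_pow]
    rw [hsum, hVW, smul_smul, neg_smul, add_neg_cancel]
  · have hsum : ∑ k, (t * a k) ^ 2 = t ^ 2 * (1 - b ^ 2) := by
      simp only [mul_pow, ← Finset.mul_sum]
      rw [← hab, add_sub_cancel_right]
    rw [norm_mul] at hnorm
    rw [hsum]
    linear_combination (‖V‖ - ‖W‖ + t * b) * hdiff + 2 * hnorm + ht

/-- Surjectivity of the map `ψ ∘ φ : Y₊ → S₊`: every `(a, b)` in the nonnegative part of
the unit sphere arises from a point `(Z, V, W)` of `Y` with nonnegative coordinates `Z_k`. -/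
theorem psi_surjective (lam : Fin 5 → Quaternion ℝ)
    (hlam : ∀ k l : Fin 5,
      (star (lam k) * lam l).re = if k = l then 1 else -1 / 4)
    (a : Fin 5 → ℝ) (ha : ∀ k, 0 ≤ a k) (b : ℝ)
    (hab : (∑ k, a k ^ 2) + b ^ 2 = 1) :
    ∃ (Z : Fin 5 → ℝ) (V W : Quaternion ℝ),
      (∀ k, 0 ≤ Z k) ∧
      (2 : ℝ) • (∑ k, (Z k ^ 2) • lam k) + V * W = 0 ∧
      (∑ k, Z k ^ 2) + ‖V‖ ^ 2 + ‖W‖ ^ 2 = 1 ∧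
      (∀ k, Z k = Real.sqrt (1 - 2 * ‖V * W‖) * a k) ∧
      ‖V‖ - ‖W‖ = Real.sqrt (1 - 2 * ‖V * W‖) * b :=
  psi_surjective_general lam a ha b hab
end

section
/- Let λ_0, …, λ_4 be quaternions with ⟨λ_k, λ_l⟩ = 1 if k = l and −1/4 if k ≠ l. Suppose (Z, V, W) and (Z', V', W') both consist of Z, Z' ∈ ℝ^5 with nonnegative entries and V, W, V', W' ∈ ℍ satisfying 2 ∑_{k} Z_k² λ_k + V W = 0, ∑_{k} Z_k² + |V|² + |W|² = 1 (and the same equations for (Z', V', W')). If Z_k / √(1 − 2|V W|) = Z'_k / √(1 − 2|V' W'|) for all k and (|V| − |W|)/√(1 − 2|V W|) = (|V'| − |W'|)/√(1 − 2|V' W'|), then Z = Z', V W = V' W', |V| = |V'|, and |W| = |W'|. -/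
/-!
Put `t = √(1 - 2|VW|)` and `z = Z / t`. The first equation gives `|VW| = 2 t² |∑ z_k² λ_k|`,
so `t² = 1 - 2|VW|` becomes `t² (1 + 4 |∑ z_k² λ_k|) = 1`: the scale `t` is determined by `z`.
Hence so are `Z = t z`, `VW`, and `|V| - |W|`; together with `|V| |W| = |VW|` these fix
`|V|` and `|W|`.
-/

theorem eq_and_eq_of_mul_eq_of_sub_eq {a b c d : ℝ} (ha : 0 ≤ a) (hb : 0 ≤ b) (hc : 0 ≤ c)
    (hd : 0 ≤ d) (hmul : a * b = c * d) (hsub : a - b = c - d) : a = c ∧ b = d := by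
  have hsq : (a + b) ^ 2 = (c + d) ^ 2 := by linear_combination (a - b + c - d) * hsub + 4 * hmul
  have hadd : a + b = c + d := (pow_left_inj₀ (by positivity) (by positivity) two_ne_zero).1 hsq
  constructor <;> linarith

section

variable {ι A : Type*} [Fintype ι] [NormedRing A] [NormedAlgebra ℝ A]
  {lam : ι → A} {Z : ι → ℝ} {V W : A}

theorem one_sub_two_mul_norm_mul_pos (h1 : (2 : ℝ) • (∑ k, (Z k ^ 2) • lam k) + V * W = 0)
    (h2 : (∑ k, Z k ^ 2) + ‖V‖ ^ 2 + ‖W‖ ^ 2 = 1) :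
    0 < 1 - 2 * ‖V * W‖ := by
  have hS : 0 ≤ ∑ k, Z k ^ 2 := by positivity
  have hle : (∑ k, Z k ^ 2) + (‖V‖ - ‖W‖) ^ 2 ≤ 1 - 2 * ‖V * W‖ := by
    nlinarith [norm_mul_le V W]
  rcases hS.lt_or_eq with hS | hS
  · nlinarith [sq_nonneg (‖V‖ - ‖W‖)]
  · have hZ : ∀ k, Z k = 0 := fun k =>
      pow_eq_zero_iff two_ne_zero |>.1 <|
        (Finset.sum_eq_zero_iff_of_nonneg fun k _ => sq_nonneg (Z k)).1 hS.symm k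
          (Finset.mem_univ k)
    have hVW : V * W = 0 := by simpa [hZ] using h1
    simp [hVW]

theorem sq_mul_one_add_four_norm_sum_div (h1 : (2 : ℝ) • (∑ k, (Z k ^ 2) • lam k) + V * W = 0)
    {t : ℝ} (ht : t ^ 2 = 1 - 2 * ‖V * W‖) (ht0 : t ≠ 0) :
    t ^ 2 * (1 + 4 * ‖∑ k, (Z k / t) ^ 2 • lam k‖) = 1 := by
  have hsum : ∑ k, (Z k / t) ^ 2 • lam k = (t ^ 2)⁻¹ • ∑ k, (Z k ^ 2) • lam k := by
    rw [Finset.smul_sum]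
    congr 1 with k
    rw [smul_smul, div_pow, div_eq_inv_mul]
  have hVW : ‖V * W‖ = 2 * ‖∑ k, (Z k ^ 2) • lam k‖ := by
    rw [eq_neg_of_add_eq_zero_right h1, norm_neg, norm_smul, Real.norm_two]
  rw [hsum, norm_smul, norm_inv, Real.norm_of_nonneg (sq_nonneg t)]
  field_simp
  linarith

end

theorem psi_injective_general (lam : Fin 5 → Quaternion ℝ)
    (Z Z' : Fin 5 → ℝ) (V W V' W' : Quaternion ℝ)
    (h1 : (2 : ℝ) • (∑ k, (Z k ^ 2) • lam k) + V * W = 0)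
    (h2 : (∑ k, Z k ^ 2) + ‖V‖ ^ 2 + ‖W‖ ^ 2 = 1)
    (h1' : (2 : ℝ) • (∑ k, (Z' k ^ 2) • lam k) + V' * W' = 0)
    (h2' : (∑ k, Z' k ^ 2) + ‖V'‖ ^ 2 + ‖W'‖ ^ 2 = 1)
    (ha : ∀ k, Z k / Real.sqrt (1 - 2 * ‖V * W‖) =
      Z' k / Real.sqrt (1 - 2 * ‖V' * W'‖))
    (hb : (‖V‖ - ‖W‖) / Real.sqrt (1 - 2 * ‖V * W‖) =
      (‖V'‖ - ‖W'‖) / Real.sqrt (1 - 2 * ‖V' * W'‖)) :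
    Z = Z' ∧ V * W = V' * W' ∧ ‖V‖ = ‖V'‖ ∧ ‖W‖ = ‖W'‖ := by
  have hD := one_sub_two_mul_norm_mul_pos h1 h2
  have hD' := one_sub_two_mul_norm_mul_pos h1' h2'
  set t := Real.sqrt (1 - 2 * ‖V * W‖)
  set t' := Real.sqrt (1 - 2 * ‖V' * W'‖)
  have ht : 0 < t := Real.sqrt_pos.2 hD
  have ht' : 0 < t' := Real.sqrt_pos.2 hD'
  have hscale : t ^ 2 * (1 + 4 * ‖∑ k, (Z k / t) ^ 2 • lam k‖) = 1 :=
    sq_mul_one_add_four_norm_sum_div h1 (Real.sq_sqrt hD.le) ht.ne'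
  have hscale' : t' ^ 2 * (1 + 4 * ‖∑ k, (Z' k / t') ^ 2 • lam k‖) = 1 :=
    sq_mul_one_add_four_norm_sum_div h1' (Real.sq_sqrt hD'.le) ht'.ne'
  simp only [ha] at hscale
  have htt : t = t' := by
    refine (pow_left_inj₀ ht.le ht'.le two_ne_zero).1 ?_
    nlinarith [norm_nonneg (∑ k, (Z' k / t') ^ 2 • lam k)]
  have hZ : Z = Z' := funext fun k => by simpa [htt, div_left_inj' ht'.ne'] using ha k
  have hVW : V * W = V' * W' := by
    rw [eq_neg_of_add_eq_zero_right h1, eq_neg_of_add_eq_zero_right h1', hZ]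
  rw [htt, div_left_inj' ht'.ne'] at hb
  obtain ⟨hV, hW⟩ := eq_and_eq_of_mul_eq_of_sub_eq (norm_nonneg V) (norm_nonneg W)
    (norm_nonneg V') (norm_nonneg W') (by rw [← norm_mul, ← norm_mul, hVW]) hb
  exact ⟨hZ, hVW, hV, hW⟩

/-- Injectivity of `ψ`: two points of `Y₊` with the same image under `ψ ∘ φ` have the
same `Z`, the same product `VW` and the same norms `|V|`, `|W|`. -/
theorem psi_injective (lam : Fin 5 → Quaternion ℝ)
    (hlam : ∀ k l : Fin 5,
      (star (lam k) * lam l).re = if k = l then 1 else -1 / 4)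
    (Z Z' : Fin 5 → ℝ) (V W V' W' : Quaternion ℝ)
    (hZ : ∀ k, 0 ≤ Z k) (hZ' : ∀ k, 0 ≤ Z' k)
    (h1 : (2 : ℝ) • (∑ k, (Z k ^ 2) • lam k) + V * W = 0)
    (h2 : (∑ k, Z k ^ 2) + ‖V‖ ^ 2 + ‖W‖ ^ 2 = 1)
    (h1' : (2 : ℝ) • (∑ k, (Z' k ^ 2) • lam k) + V' * W' = 0)
    (h2' : (∑ k, Z' k ^ 2) + ‖V'‖ ^ 2 + ‖W'‖ ^ 2 = 1)
    (ha : ∀ k, Z k / Real.sqrt (1 - 2 * ‖V * W‖) =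
      Z' k / Real.sqrt (1 - 2 * ‖V' * W'‖))
    (hb : (‖V‖ - ‖W‖) / Real.sqrt (1 - 2 * ‖V * W‖) =
      (‖V'‖ - ‖W'‖) / Real.sqrt (1 - 2 * ‖V' * W'‖)) :
    Z = Z' ∧ V * W = V' * W' ∧ ‖V‖ = ‖V'‖ ∧ ‖W‖ = ‖W'‖ :=
  psi_injective_general lam Z Z' V W V' W' h1 h2 h1' h2' ha hb
end

section
/- Let λ_0, …, λ_4 be quaternions with ⟨λ_k, λ_l⟩ = 1 if k = l and −1/4 if k ≠ l. Suppose Z, Z' ∈ ℝ^5 have nonnegative entries and V, W ∈ ℍ are such that both (Z, V, W) and (Z', V, W) satisfy 2 ∑_{k=0}^{4} Z_k² λ_k + V W = 0 and ∑_{k=0}^{4} Z_k² + |V|² + |W|² = 1. Then Z = Z'. -/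
/-!
Subtracting the two systems, `a k := Z k ^ 2 - Z' k ^ 2` satisfies `∑ a k = 0` and
`∑ a k • λ k = 0`. For vectors with Gram matrix `c • 1 + d` (here `c = 5/4`, `d = -1/4`) one has
`‖∑ a k • λ k‖² = c ∑ a k ^ 2 + d (∑ a k)²`, so `a = 0`, and nonnegativity gives `Z = Z'`.
-/

open Quaternion Finset RealInnerProductSpace

theorem Quaternion.inner_eq_re_star_mul (a b : ℍ[ℝ]) : ⟪a, b⟫ = (star a * b).re := by
  rw [inner_def, re_mul, re_mul]
  simp only [re_star, imI_star, imJ_star, imK_star]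
  ring

section GramMatrix

variable {E ι : Type*} [NormedAddCommGroup E] [InnerProductSpace ℝ E] [Fintype ι] [DecidableEq ι]

theorem norm_sq_sum_smul_of_inner_eq_ite (v : ι → E) (c d : ℝ)
    (hv : ∀ k l, ⟪v k, v l⟫ = if k = l then c + d else d) (a : ι → ℝ) :
    ‖∑ k, a k • v k‖ ^ 2 = c * ∑ k, a k ^ 2 + d * (∑ k, a k) ^ 2 := by
  rw [← real_inner_self_eq_norm_sq]
  simp only [sum_inner, inner_sum, inner_smul_left, inner_smul_right, hv, conj_trivial]
  have hrow : ∀ k, ∑ l, a l * (if l = k then c + d else d) = c * a k + d * ∑ l, a l := by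
    intro k
    have hsplit : ∀ l, (if l = k then c + d else d) = d + if l = k then c else 0 := by
      intro l
      split_ifs <;> ring
    simp only [hsplit, mul_add, mul_ite, mul_zero, sum_add_distrib, sum_ite_eq', mem_univ,
      if_true, ← sum_mul]
    ring
  simp only [hrow, mul_add, sum_add_distrib, mul_left_comm _ c, mul_left_comm _ d, ← mul_sum,
    ← sum_mul, ← sq]

theorem eq_zero_of_sum_eq_zero_of_sum_smul_eq_zero (v : ι → E) {c : ℝ} (hc : 0 < c) (d : ℝ)
    (hv : ∀ k l, ⟪v k, v l⟫ = if k = l then c + d else d) {a : ι → ℝ}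
    (ha : ∑ k, a k = 0) (hav : ∑ k, a k • v k = 0) : a = 0 := by
  have hsq : c * ∑ k, a k ^ 2 = 0 := by
    simpa [ha, hav] using (norm_sq_sum_smul_of_inner_eq_ite v c d hv a).symm
  have hsq' := (sum_eq_zero_iff_of_nonneg fun k _ => sq_nonneg (a k)).1
    ((mul_eq_zero.1 hsq).resolve_left hc.ne')
  funext k
  exact pow_eq_zero_iff two_ne_zero |>.1 (hsq' k (mem_univ k))

end GramMatrix

/-- A point of `Y₊` is determined by `(V, W)`: if `(Z, V, W)` and `(Z', V, W)` both lie
in `Y` and have nonnegative coordinates `Z_k`, `Z'_k`, then `Z = Z'`. -/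
theorem Z_determined_by_VW (lam : Fin 5 → Quaternion ℝ)
    (hlam : ∀ k l : Fin 5,
      (star (lam k) * lam l).re = if k = l then 1 else -1 / 4)
    (Z Z' : Fin 5 → ℝ) (V W : Quaternion ℝ)
    (hZ : ∀ k, 0 ≤ Z k) (hZ' : ∀ k, 0 ≤ Z' k)
    (h1 : (2 : ℝ) • (∑ k, (Z k ^ 2) • lam k) + V * W = 0)
    (h2 : (∑ k, Z k ^ 2) + ‖V‖ ^ 2 + ‖W‖ ^ 2 = 1)
    (h1' : (2 : ℝ) • (∑ k, (Z' k ^ 2) • lam k) + V * W = 0)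
    (h2' : (∑ k, Z' k ^ 2) + ‖V‖ ^ 2 + ‖W‖ ^ 2 = 1) :
    Z = Z' := by
  have hgram : ∀ k l, ⟪lam k, lam l⟫ = if k = l then 5 / 4 + -1 / 4 else -1 / 4 := by
    intro k l
    rw [inner_eq_re_star_mul, hlam]
    norm_num
  have hsum : ∑ k, (Z k ^ 2 - Z' k ^ 2) = 0 := by
    rw [sum_sub_distrib]
    linarith
  have hcomb : ∑ k, (Z k ^ 2 - Z' k ^ 2) • lam k = 0 := by
    have h := h1.trans h1'.symm
    rw [add_left_inj, smul_right_inj two_ne_zero] at h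
    simp only [sub_smul, sum_sub_distrib, h, sub_self]
  have hsq := congrFun (eq_zero_of_sum_eq_zero_of_sum_smul_eq_zero lam (by norm_num) _ hgram
    hsum hcomb)
  funext k
  exact (sq_eq_sq₀ (hZ k) (hZ' k)).1 (sub_eq_zero.1 (hsq k))
end

section
/- Let m ≥ 1 and let Y be the set of all (Z, V, W) ∈ ℂ^m × ℍ × ℍ satisfying (1/2) ∑_{k=1}^{m} |Z_k|² + V W = 0 and ∑_{k=1}^{m} |Z_k|² + |V|² + |W|² = 1, endowed with the subspace topology. Then Y is homeomorphic to the product S^{2m} × S³ of the unit sphere of ℝ^{2m+1} and the unit sphere of ℝ^4. -/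
/-!
On `Y` the product `V W = -½‖Z‖²` is a nonpositive real, so `‖V‖‖W‖ = ½‖Z‖²`, and the second
equation becomes `(‖V‖ + ‖W‖)² = 1`. Left-multiplying by `star V` shows that `V` and `star W` are
negatively proportional, hence `q = V - star W` is a unit quaternion with `V = ‖V‖ q` and
`W = -‖W‖ star q`. So `(Z, V, W) ↦ ((√2 Z, ‖V‖ - ‖W‖), q)` maps `Y` homeomorphically onto the
product of the unit spheres of `ℂ^m × ℝ ≅ ℝ^(2m+1)` and `ℍ ≅ ℝ⁴`, with inverse
`((x, t), q) ↦ (x / √2, (1 + t)/2 • q, -(1 - t)/2 • star q)`.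
-/

open Quaternion Metric

theorem smul_sub_eq_of_smul_eq_neg_smul {R M : Type*} [Ring R] [AddCommGroup M] [Module R M]
    {a b : R} {v w : M} (hab : a + b = 1) (h : a • w = -(b • v)) :
    a • (v - w) = v ∧ b • (v - w) = -w := by
  constructor
  · rw [smul_sub, h, sub_neg_eq_add, ← add_smul, hab, one_smul]
  · rw [smul_sub, ← neg_neg (b • v), ← h, ← neg_add', ← add_smul, hab, one_smul]

theorem WithLp.norm_sq_add_sq_of_mem_sphere {E : Type*} [SeminormedAddCommGroup E] {x : E}
    {t : ℝ} (h : WithLp.toLp 2 (x, t) ∈ sphere (0 : WithLp 2 (E × ℝ)) 1) : ‖x‖ ^ 2 + t ^ 2 = 1 := by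
  rw [mem_sphere_zero_iff_norm, ← pow_eq_one_iff_of_nonneg (norm_nonneg _) two_ne_zero,
    WithLp.prod_norm_sq_eq_of_L2] at h
  simpa only [WithLp.toLp_fst, WithLp.toLp_snd, Real.norm_eq_abs, sq_abs] using h

namespace Quaternion

theorem norm_smul_star_eq_of_mul_eq_neg {V W : ℍ} (h : V * W = ((-(‖V‖ * ‖W‖) : ℝ) : ℍ)) :
    ‖V‖ • star W = -(‖W‖ • V) := by
  rcases eq_or_ne V 0 with rfl | hV
  · simp
  have key : ‖V‖ • (‖V‖ • W) = ‖V‖ • -(‖W‖ • star V) := by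
    have := congrArg (star V * ·) h
    simp only [← mul_assoc, star_mul_self, coe_mul_eq_smul, mul_coe_eq_smul] at this
    rw [smul_smul, ← normSq_eq_norm_mul_self, this, smul_neg, smul_smul, neg_smul, mul_comm]
  have := congrArg star (smul_right_injective ℍ (norm_ne_zero_iff.2 hV) key)
  simpa only [star_smul, star_neg, star_star] using this

end Quaternion

noncomputable section

variable {E : Type*} [NormedAddCommGroup E]

variable (E) in
def quaternionQuadric : Set (E × ℍ × ℍ) :=
  {p | ((1 / 2 * ‖p.1‖ ^ 2 : ℝ) : ℍ) + p.2.1 * p.2.2 = 0 ∧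
    ‖p.1‖ ^ 2 + ‖p.2.1‖ ^ 2 + ‖p.2.2‖ ^ 2 = 1}

namespace quaternionQuadric

variable {x : E} {V W : ℍ}

theorem mul_eq (hp : (x, V, W) ∈ quaternionQuadric E) :
    V * W = ((-(1 / 2 * ‖x‖ ^ 2) : ℝ) : ℍ) := by
  rw [coe_neg]; exact eq_neg_of_add_eq_zero_right hp.1

theorem norm_mul_norm (hp : (x, V, W) ∈ quaternionQuadric E) :
    ‖V‖ * ‖W‖ = 1 / 2 * ‖x‖ ^ 2 := by
  have := congrArg norm (mul_eq hp)
  rwa [norm_mul, norm_coe, norm_neg, Real.norm_of_nonneg (by positivity)] at this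

theorem norm_add_norm (hp : (x, V, W) ∈ quaternionQuadric E) : ‖V‖ + ‖W‖ = 1 := by
  have hsq : (‖V‖ + ‖W‖) ^ 2 = 1 := by nlinarith [hp.2, norm_mul_norm hp]
  exact (pow_eq_one_iff_of_nonneg (by positivity) two_ne_zero).1 hsq

theorem smul_sub_star (hp : (x, V, W) ∈ quaternionQuadric E) :
    ‖V‖ • (V - star W) = V ∧ ‖W‖ • (V - star W) = -star W := by
  refine smul_sub_eq_of_smul_eq_neg_smul (norm_add_norm hp)
    (norm_smul_star_eq_of_mul_eq_neg ?_)
  rw [mul_eq hp, ← norm_mul_norm hp]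

theorem norm_sub_star (hp : (x, V, W) ∈ quaternionQuadric E) : ‖V - star W‖ = 1 := by
  obtain ⟨hV, hW⟩ := smul_sub_star hp
  have := congrArg₂ (‖·‖ + ‖·‖) hV hW
  simpa only [norm_smul, norm_norm, norm_neg, norm_star, ← add_mul, norm_add_norm hp, one_mul]
    using this

end quaternionQuadric

variable [NormedSpace ℝ E]

def quadricToSpheres (p : E × ℍ × ℍ) : WithLp 2 (E × ℝ) × ℍ :=
  (WithLp.toLp 2 (√2 • p.1, ‖p.2.1‖ - ‖p.2.2‖), p.2.1 - star p.2.2)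

def spheresToQuadric (y : WithLp 2 (E × ℝ) × ℍ) : E × ℍ × ℍ :=
  ((√2)⁻¹ • y.1.fst, ((1 + y.1.snd) / 2) • y.2, -(((1 - y.1.snd) / 2) • star y.2))

theorem continuous_quadricToSpheres : Continuous (quadricToSpheres (E := E)) := by
  unfold quadricToSpheres; fun_prop

theorem continuous_spheresToQuadric : Continuous (spheresToQuadric (E := E)) := by
  unfold spheresToQuadric; fun_prop

theorem quadricToSpheres_mem {p : E × ℍ × ℍ} (hp : p ∈ quaternionQuadric E) :
    quadricToSpheres p ∈ sphere (0 : WithLp 2 (E × ℝ)) 1 ×ˢ sphere (0 : ℍ) 1 := by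
  obtain ⟨x, V, W⟩ := p
  refine ⟨?_, mem_sphere_zero_iff_norm.2 (quaternionQuadric.norm_sub_star hp)⟩
  rw [mem_sphere_zero_iff_norm, ← pow_eq_one_iff_of_nonneg (norm_nonneg _) two_ne_zero,
    quadricToSpheres, WithLp.prod_norm_sq_eq_of_L2]
  simp only [WithLp.toLp_fst, WithLp.toLp_snd, norm_smul, Real.norm_eq_abs, sq_abs, mul_pow,
    Real.sq_sqrt zero_le_two, abs_of_nonneg (Real.sqrt_nonneg 2)]
  nlinarith [quaternionQuadric.norm_mul_norm hp, quaternionQuadric.norm_add_norm hp]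

theorem spheresToQuadric_mem {y : WithLp 2 (E × ℝ) × ℍ}
    (hy : y ∈ sphere (0 : WithLp 2 (E × ℝ)) 1 ×ˢ sphere (0 : ℍ) 1) :
    spheresToQuadric y ∈ quaternionQuadric E := by
  obtain ⟨⟨⟨x, t⟩⟩, q⟩ := y
  obtain ⟨hx, hq⟩ := hy
  have hxt := WithLp.norm_sq_add_sq_of_mem_sphere hx
  rw [mem_sphere_zero_iff_norm] at hq
  have hqq : q * star q = ((1 : ℝ) : ℍ) := by
    rw [self_mul_star, normSq_eq_norm_mul_self, hq, one_mul]
  have hx' : ‖(√2)⁻¹ • x‖ ^ 2 = ‖x‖ ^ 2 / 2 := by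
    rw [norm_smul, mul_pow, norm_inv, Real.norm_of_nonneg (Real.sqrt_nonneg 2), inv_pow,
      Real.sq_sqrt zero_le_two, inv_mul_eq_div]
  simp only [spheresToQuadric, quaternionQuadric, Set.mem_ofPred_eq, mul_neg,
    smul_mul_smul_comm, hqq, smul_coe, WithLp.toLp_fst, WithLp.toLp_snd]
  refine ⟨?_, ?_⟩
  · rw [← coe_neg, ← coe_add, ← coe_zero, coe_inj, hx']
    linear_combination hxt / 4
  · rw [hx', norm_neg, norm_smul, norm_smul, norm_star, hq, Real.norm_eq_abs, Real.norm_eq_abs]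
    simp only [mul_one, sq_abs]
    linear_combination hxt / 2

theorem spheresToQuadric_quadricToSpheres {p : E × ℍ × ℍ} (hp : p ∈ quaternionQuadric E) :
    spheresToQuadric (quadricToSpheres p) = p := by
  obtain ⟨x, V, W⟩ := p
  obtain ⟨hV, hW⟩ := quaternionQuadric.smul_sub_star hp
  have hsum := quaternionQuadric.norm_add_norm hp
  have hplus : (1 + (‖V‖ - ‖W‖)) / 2 = ‖V‖ := by linarith
  have hminus : (1 - (‖V‖ - ‖W‖)) / 2 = ‖W‖ := by linarith
  simp only [spheresToQuadric, quadricToSpheres, WithLp.toLp_fst, WithLp.toLp_snd, hplus, hminus,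
    inv_smul_smul₀ (Real.sqrt_ne_zero'.2 zero_lt_two), hV,
    ← Quaternion.star_smul, hW, star_neg, star_star, neg_neg]

theorem quadricToSpheres_spheresToQuadric {y : WithLp 2 (E × ℝ) × ℍ}
    (hy : y ∈ sphere (0 : WithLp 2 (E × ℝ)) 1 ×ˢ sphere (0 : ℍ) 1) :
    quadricToSpheres (spheresToQuadric y) = y := by
  obtain ⟨⟨⟨x, t⟩⟩, q⟩ := y
  obtain ⟨hx, hq⟩ := hy
  have hxt := WithLp.norm_sq_add_sq_of_mem_sphere hx
  rw [mem_sphere_zero_iff_norm] at hq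
  have ht : |t| ≤ 1 := abs_le_one_iff_mul_self_le_one.2 (by nlinarith [norm_nonneg x])
  have hplus : 0 ≤ (1 + t) / 2 := by linarith [neg_abs_le t]
  have hminus : 0 ≤ (1 - t) / 2 := by linarith [le_abs_self t]
  simp only [spheresToQuadric, quadricToSpheres, WithLp.toLp_fst, WithLp.toLp_snd,
    smul_inv_smul₀ (Real.sqrt_ne_zero'.2 zero_lt_two), norm_neg, norm_smul, norm_star, hq,
    Real.norm_of_nonneg hplus, Real.norm_of_nonneg hminus, star_neg, Quaternion.star_smul,
    star_star]
  exact Prod.ext (congrArg (WithLp.toLp 2) (Prod.ext rfl (by ring))) (by module)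

variable (E) in
def quaternionQuadricHomeomorph :
    quaternionQuadric E ≃ₜ (sphere (0 : WithLp 2 (E × ℝ)) 1 ×ˢ sphere (0 : ℍ) 1 : Set _) where
  toFun p := ⟨quadricToSpheres p, quadricToSpheres_mem p.2⟩
  invFun y := ⟨spheresToQuadric y, spheresToQuadric_mem y.2⟩
  left_inv p := Subtype.ext (spheresToQuadric_quadricToSpheres p.2)
  right_inv y := Subtype.ext (quadricToSpheres_spheresToQuadric y.2)
  continuous_toFun := (continuous_quadricToSpheres.comp continuous_subtype_val).subtype_mk _
  continuous_invFun := (continuous_spheresToQuadric.comp continuous_subtype_val).subtype_mk _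

end

def LinearIsometryEquiv.sphereHomeomorph {𝕜 E F : Type*} [NormedField 𝕜]
    [SeminormedAddCommGroup E] [SeminormedAddCommGroup F] [NormedSpace 𝕜 E] [NormedSpace 𝕜 F]
    (L : E ≃ₗᵢ[𝕜] F) (r : ℝ) : sphere (0 : E) r ≃ₜ sphere (0 : F) r :=
  L.toHomeomorph.subtype fun x => by
    simp only [mem_sphere_zero_iff_norm, LinearIsometryEquiv.coe_toHomeomorph, L.norm_map]

theorem finrank_withLp_euclideanSpace_complex_prod_real (m : ℕ) :
    Module.finrank ℝ (WithLp 2 (EuclideanSpace ℂ (Fin m) × ℝ)) = 2 * m + 1 := by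
  rw [(WithLp.linearEquiv 2 ℝ _).finrank_eq, Module.finrank_prod,
    ← Module.finrank_mul_finrank ℝ ℂ, finrank_euclideanSpace_fin, Complex.finrank_real_complex,
    Module.finrank_self]

theorem Y_homeomorphic_sphere_prod_general (m : ℕ) :
    Nonempty
      (({p : (Fin m → ℂ) × Quaternion ℝ × Quaternion ℝ |
          ((((1 : ℝ) / 2) * ∑ k, ‖p.1 k‖ ^ 2 : ℝ) : Quaternion ℝ)
            + p.2.1 * p.2.2 = 0 ∧
          (∑ k, ‖p.1 k‖ ^ 2) + ‖p.2.1‖ ^ 2 + ‖p.2.2‖ ^ 2 = 1} :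
        Set ((Fin m → ℂ) × Quaternion ℝ × Quaternion ℝ)) ≃ₜ
      (Metric.sphere (0 : EuclideanSpace ℝ (Fin (2 * m + 1))) 1 ×
        Metric.sphere (0 : EuclideanSpace ℝ (Fin 4)) 1)) := by
  let toEuclidean : (Fin m → ℂ) × ℍ × ℍ ≃ₜ EuclideanSpace ℂ (Fin m) × ℍ × ℍ :=
    (EuclideanSpace.equiv (Fin m) ℂ).toHomeomorph.symm.prodCongr (.refl _)
  let L : WithLp 2 (EuclideanSpace ℂ (Fin m) × ℝ) ≃ₗᵢ[ℝ] EuclideanSpace ℝ (Fin (2 * m + 1)) :=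
    ((stdOrthonormalBasis ℝ _).reindex
      (finCongr (finrank_withLp_euclideanSpace_complex_prod_real m))).repr
  refine ⟨Homeomorph.trans ?_ <| (quaternionQuadricHomeomorph _).trans <|
    (Homeomorph.Set.prod _ _).trans <|
      (L.sphereHomeomorph 1).prodCongr (linearIsometryEquivTuple.sphereHomeomorph 1)⟩
  exact toEuclidean.subtype fun p => by
    simp [toEuclidean, quaternionQuadric, EuclideanSpace.norm_sq_eq]

/-- When all `λ_k` equal `1/2` (so the origin is not in their convex hull), the
intersection of quadrics `Y` is homeomorphic to `S^{2m} × S³`. -/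
theorem Y_homeomorphic_sphere_prod (m : ℕ) (hm : 1 ≤ m) :
    Nonempty
      (({p : (Fin m → ℂ) × Quaternion ℝ × Quaternion ℝ |
          ((((1 : ℝ) / 2) * ∑ k, ‖p.1 k‖ ^ 2 : ℝ) : Quaternion ℝ)
            + p.2.1 * p.2.2 = 0 ∧
          (∑ k, ‖p.1 k‖ ^ 2) + ‖p.2.1‖ ^ 2 + ‖p.2.2‖ ^ 2 = 1} :
        Set ((Fin m → ℂ) × Quaternion ℝ × Quaternion ℝ)) ≃ₜ
      (Metric.sphere (0 : EuclideanSpace ℝ (Fin (2 * m + 1))) 1 ×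
        Metric.sphere (0 : EuclideanSpace ℝ (Fin 4)) 1)) :=
  Y_homeomorphic_sphere_prod_general m
end
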